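/- arXiv:1809.08727 — 5 statements merged into one kernel-verified Lean document; each statement's English description precedes it below -/
import Mathlib

section
/- For m ≥ 1 and a real parameter x > 0, define g_{m-1}(z) = Σ_{k=0}^{m-1} z^k x^{m-1-k}. Then for all z > 0, the quantity T_m(z) := (z·g_{m-1}'(z))' · g_{m-1}(z) − z·(g_{m-1}'(z))² is nonnegative. -/
/-!
Write `g = ∑ₖ cₖ zᵏ` with `cₖ = x^(m-1-k) ≥ 0` and let `θ = z d/dz` be the Euler operator, so that
`θ^j g = ∑ₖ kʲ cₖ zᵏ`. Multiplying `T_m` by `z` gives `(θ²g)·g - (θg)²`, which is nonnegative by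
the Cauchy–Schwarz inequality for the nonnegative weights `cₖ zᵏ`.
-/

open Finset

theorem mul_deriv_sum_pow_mul {𝕜 : Type*} [NontriviallyNormedField 𝕜] (s : Finset ℕ)
    (c : ℕ → 𝕜) (t : 𝕜) :
    t * deriv (fun u => ∑ k ∈ s, u ^ k * c k) t = ∑ k ∈ s, t ^ k * (k * c k) := by
  have hderiv : HasDerivAt (fun u => ∑ k ∈ s, u ^ k * c k)
      (∑ k ∈ s, (k * t ^ (k - 1)) * c k) t :=
    HasDerivAt.fun_sum fun k _ => (hasDerivAt_pow k t).mul_const (c k)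
  rw [hderiv.deriv, mul_sum]
  refine sum_congr rfl fun k _ => ?_
  cases k with
  | zero => simp
  | succ n => simp only [Nat.add_sub_cancel, pow_succ]; ring

theorem sq_sum_pow_mul_le {s : Finset ℕ} {c : ℕ → ℝ} (hc : ∀ k ∈ s, 0 ≤ c k) {z : ℝ}
    (hz : 0 ≤ z) :
    (∑ k ∈ s, z ^ k * (k * c k)) ^ 2 ≤
      (∑ k ∈ s, z ^ k * (k * (k * c k))) * ∑ k ∈ s, z ^ k * c k := by
  have hw : ∀ k ∈ s, 0 ≤ z ^ k * c k := fun k hk => mul_nonneg (pow_nonneg hz k) (hc k hk)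
  refine sum_sq_le_sum_mul_sum_of_sq_le_mul s (fun k hk => ?_) hw fun k _ => le_of_eq ?_
  · have hwk := hw k hk
    calc (0 : ℝ) ≤ (k : ℝ) ^ 2 * (z ^ k * c k) := by positivity
      _ = z ^ k * (k * (k * c k)) := by ring
  · ring

theorem stmt_2_general (m : ℕ) (x : ℝ) (hx : 0 < x) (z : ℝ) (hz : 0 < z) :
    0 ≤
      deriv (fun t : ℝ =>
          t * deriv (fun s : ℝ => ∑ k ∈ Finset.range m, s ^ k * x ^ (m - 1 - k)) t) z *
        (∑ k ∈ Finset.range m, z ^ k * x ^ (m - 1 - k)) -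
      z * (deriv (fun s : ℝ => ∑ k ∈ Finset.range m, s ^ k * x ^ (m - 1 - k)) z) ^ 2 := by
  set c : ℕ → ℝ := fun k => x ^ (m - 1 - k)
  have hθg : (fun t : ℝ => t * deriv (fun s => ∑ k ∈ range m, s ^ k * c k) t) =
      fun t => ∑ k ∈ range m, t ^ k * (k * c k) :=
    funext (mul_deriv_sum_pow_mul _ c)
  rw [hθg]
  have hθ2g := mul_deriv_sum_pow_mul (range m) (fun k => k * c k) z
  have hθg_z := mul_deriv_sum_pow_mul (range m) c z
  have hCS := sq_sum_pow_mul_le (s := range m) (fun k _ => pow_nonneg hx.le (m - 1 - k)) hz.le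
  refine nonneg_of_mul_nonneg_right ?_ hz
  calc (0 : ℝ) ≤ (∑ k ∈ range m, z ^ k * (k * (k * c k))) * (∑ k ∈ range m, z ^ k * c k) -
        (∑ k ∈ range m, z ^ k * (k * c k)) ^ 2 := sub_nonneg.2 hCS
    _ = _ := by rw [← hθ2g, ← hθg_z]; ring

/-- For `g_{m-1}(z) = Σ_{k=0}^{m-1} z^k x^{m-1-k}` with `x > 0`,
the quantity `T_m(z) = (z g'(z))' g(z) - z (g'(z))²` is nonnegative for all `z > 0`. -/
theorem stmt_2 (m : ℕ) (hm : 1 ≤ m) (x : ℝ) (hx : 0 < x) (z : ℝ) (hz : 0 < z) :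
    0 ≤
      deriv (fun t : ℝ =>
          t * deriv (fun s : ℝ => ∑ k ∈ Finset.range m, s ^ k * x ^ (m - 1 - k)) t) z *
        (∑ k ∈ Finset.range m, z ^ k * x ^ (m - 1 - k)) -
      z * (deriv (fun s : ℝ => ∑ k ∈ Finset.range m, s ^ k * x ^ (m - 1 - k)) z) ^ 2 :=
  stmt_2_general m x hx z hz
end

section
/- Fix m ≥ 1, n ≥ 1, positive reals x₁,…,x_n > 0, positive reals y_i for i in a subset I ⊆ {1,…,n}, and χ ∈ (0, m−1 + |I|/n). Define p(z) = (z/n) Σ_{i∈I} y_i/(1+y_i z) + (z/n) Σ_{j=1}^n g_{m-1,j}'(z)/g_{m-1,j}(z) − χ, where g_{m-1,j}(z) = Σ_{k=0}^{m-1} z^k x_j^{m-1-k}. Then p has exactly one root in the interval (0, +∞). -/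
/-!
With `1 + y z = ∑_{k<2} y^k z^k`, every summand of `n (p(z) + χ)` is the elasticity
`z g'(z) / g(z) = ∑ k a_k z^k / ∑ a_k z^k` of a polynomial `g = ∑_{k<d} a_k z^k` with positive
coefficients, i.e. the mean of `k` under the weights `a_k z^k`. Raising `z` tilts these weights
towards larger `k`, so the mean is nondecreasing, and strictly increasing once `d ≥ 2`; it is `0`
at `z = 0` and tends to `d - 1` at infinity. Hence `n (p + χ)` increases strictly from `0` to
`|I| + n (m - 1) > n χ`, and the intermediate value theorem gives exactly one root.
-/

open Finset Filter Topology

theorem two_mul_sum_mul_sum_sub_eq_sum_sum {ι R : Type*} [CommRing R] (s : Finset ι)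
    (f u v : ι → R) :
    2 * ((∑ k ∈ s, f k * u k) * ∑ l ∈ s, v l - (∑ k ∈ s, f k * v k) * ∑ l ∈ s, u l) =
      ∑ k ∈ s, ∑ l ∈ s, (f k - f l) * (u k * v l - u l * v k) := by
  have hswap : ∑ k ∈ s, ∑ l ∈ s, f l * (u k * v l - u l * v k) =
      -∑ k ∈ s, ∑ l ∈ s, f k * (u k * v l - u l * v k) := by
    rw [sum_comm]
    simp only [← sum_neg_distrib, neg_mul_eq_mul_neg, neg_sub]
  have hexpand : (∑ k ∈ s, f k * u k) * ∑ l ∈ s, v l - (∑ k ∈ s, f k * v k) * ∑ l ∈ s, u l =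
      ∑ k ∈ s, ∑ l ∈ s, f k * (u k * v l - u l * v k) := by
    simp only [sum_mul_sum, ← sum_sub_distrib]
    exact sum_congr rfl fun _ _ => sum_congr rfl fun _ _ => by ring
  simp only [sub_mul, sum_sub_distrib, hswap, hexpand]
  ring

theorem sub_mul_pow_mul_pow_sub_nonneg {R : Type*} [CommRing R] [LinearOrder R]
    [IsStrictOrderedRing R] {a b : R} (ha : 0 ≤ a) (hab : a ≤ b) (k l : ℕ) :
    0 ≤ ((k : R) - l) * (b ^ k * a ^ l - b ^ l * a ^ k) := by
  wlog hkl : k ≤ l generalizing k l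
  · convert this l k (by omega) using 1
    ring
  obtain ⟨d, rfl⟩ := Nat.exists_eq_add_of_le hkl
  have h : ((k : R) - (k + d : ℕ)) * (b ^ k * a ^ (k + d) - b ^ (k + d) * a ^ k) =
      d * ((a * b) ^ k * (b ^ d - a ^ d)) := by
    push_cast
    ring
  rw [h]
  exact mul_nonneg d.cast_nonneg <| mul_nonneg (pow_nonneg (mul_nonneg ha (ha.trans hab)) _)
    (sub_nonneg.2 (pow_le_pow_left₀ ha hab d))

def powSum (a : ℕ → ℝ) (m : ℕ) (z : ℝ) : ℝ :=
  ∑ k ∈ range m, z ^ k * a k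

noncomputable def elasticity (a : ℕ → ℝ) (m : ℕ) (z : ℝ) : ℝ :=
  powSum (fun k => k * a k) m z / powSum a m z

theorem continuous_powSum (a : ℕ → ℝ) (m : ℕ) : Continuous (powSum a m) := by
  unfold powSum
  fun_prop

theorem mul_deriv_powSum (a : ℕ → ℝ) (m : ℕ) (z : ℝ) :
    z * deriv (powSum a m) z = powSum (fun k => k * a k) m z := by
  have hderiv : HasDerivAt (powSum a m) (∑ k ∈ range m, k * z ^ (k - 1) * a k) z :=
    HasDerivAt.fun_sum fun k _ => by simpa using (hasDerivAt_pow k z).mul_const (a k)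
  rw [hderiv.deriv, powSum, mul_sum]
  refine sum_congr rfl fun k _ => ?_
  cases k with
  | zero => simp
  | succ k => simp only [Nat.add_sub_cancel, pow_succ]; ring

theorem mul_deriv_powSum_div (a : ℕ → ℝ) (m : ℕ) (z : ℝ) :
    z * deriv (powSum a m) z / powSum a m z = elasticity a m z := by
  rw [mul_deriv_powSum, elasticity]

theorem elasticity_two_pow (y z : ℝ) : elasticity (fun k => y ^ k) 2 z = y * z / (1 + y * z) := by
  simp only [elasticity, powSum, sum_range_succ, range_zero, sum_empty]
  push_cast
  ring

theorem elasticity_zero (a : ℕ → ℝ) (m : ℕ) : elasticity a m 0 = 0 := by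
  rw [elasticity, powSum, sum_eq_zero fun k _ => ?_, zero_div]
  rcases k with _ | k <;> simp

theorem two_mul_powSum_cross_eq (a : ℕ → ℝ) (m : ℕ) (z w : ℝ) :
    2 * (powSum (fun k => k * a k) m w * powSum a m z -
        powSum (fun k => k * a k) m z * powSum a m w) =
      ∑ k ∈ range m, ∑ l ∈ range m,
        a k * a l * (((k : ℝ) - l) * (w ^ k * z ^ l - w ^ l * z ^ k)) := by
  have h := two_mul_sum_mul_sum_sub_eq_sum_sum (range m) (fun k => (k : ℝ))
    (fun k => w ^ k * a k) (fun k => z ^ k * a k)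
  have hweighted : ∀ t, powSum (fun k => k * a k) m t = ∑ k ∈ range m, (k : ℝ) * (t ^ k * a k) :=
    fun t => sum_congr rfl fun k _ => by ring
  rw [hweighted, hweighted, powSum, powSum, h]
  exact sum_congr rfl fun k _ => sum_congr rfl fun l _ => by ring

theorem tendsto_powSum_div_pow_atTop (b : ℕ → ℝ) (d : ℕ) :
    Tendsto (fun z => powSum b (d + 1) z / z ^ d) atTop (𝓝 (b d)) := by
  have hlow : ∀ k ∈ range d, Tendsto (fun z : ℝ => z ^ k * b k / z ^ d) atTop (𝓝 0) :=
    fun k hk => by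
      simpa only [mul_comm] using
        ((Asymptotics.isLittleO_pow_pow_atTop_of_lt (mem_range.1 hk)).const_mul_left
          (b k)).tendsto_div_nhds_zero
  have hlim := (tendsto_finsetSum _ hlow).add (tendsto_const_nhds (x := b d))
  rw [sum_const_zero, zero_add] at hlim
  refine hlim.congr' ?_
  filter_upwards [eventually_ne_atTop 0] with z hz
  rw [powSum, sum_range_succ, add_div, mul_div_cancel_left₀ _ (pow_ne_zero d hz), sum_div]

section elasticity

variable {a : ℕ → ℝ} {m : ℕ}

theorem powSum_pos (hm : 0 < m) (ha : ∀ k, 0 < a k) {z : ℝ} (hz : 0 ≤ z) :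
    0 < powSum a m z :=
  sum_pos' (fun k _ => mul_nonneg (pow_nonneg hz k) (ha k).le)
    ⟨0, mem_range.2 hm, by simpa using ha 0⟩

theorem continuousOn_elasticity (hm : 0 < m) (ha : ∀ k, 0 < a k) :
    ContinuousOn (elasticity a m) (Set.Ici 0) :=
  (continuous_powSum _ m).continuousOn.div (continuous_powSum a m).continuousOn
    fun _ hz => (powSum_pos hm ha hz).ne'

theorem monotoneOn_elasticity (hm : 0 < m) (ha : ∀ k, 0 < a k) :
    MonotoneOn (elasticity a m) (Set.Ici 0) := by
  intro z hz w hw hzw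
  rw [elasticity, elasticity, div_le_div_iff₀ (powSum_pos hm ha hz) (powSum_pos hm ha hw)]
  have hcross := two_mul_powSum_cross_eq a m z w
  have hnonneg : 0 ≤ ∑ k ∈ range m, ∑ l ∈ range m,
      a k * a l * (((k : ℝ) - l) * (w ^ k * z ^ l - w ^ l * z ^ k)) :=
    sum_nonneg fun k _ => sum_nonneg fun l _ => mul_nonneg (mul_pos (ha k) (ha l)).le
      (sub_mul_pow_mul_pow_sub_nonneg hz hzw k l)
  linarith

theorem strictMonoOn_elasticity (hm : 2 ≤ m) (ha : ∀ k, 0 < a k) :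
    StrictMonoOn (elasticity a m) (Set.Ici 0) := by
  intro z hz w hw hzw
  have hm0 : 0 < m := by omega
  rw [elasticity, elasticity, div_lt_div_iff₀ (powSum_pos hm0 ha hz) (powSum_pos hm0 ha hw)]
  set T : ℕ → ℕ → ℝ := fun k l => a k * a l * (((k : ℝ) - l) * (w ^ k * z ^ l - w ^ l * z ^ k))
  have hT : ∀ k l, 0 ≤ T k l := fun k l =>
    mul_nonneg (mul_pos (ha k) (ha l)).le (sub_mul_pow_mul_pow_sub_nonneg hz hzw.le k l)
  have h1 : 1 ∈ range m := mem_range.2 (by omega)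
  have h0 : 0 ∈ range m := mem_range.2 hm0
  have hpos : 0 < T 1 0 := by
    simp only [T, Nat.cast_one, Nat.cast_zero, pow_one, pow_zero]
    nlinarith [mul_pos (ha 1) (ha 0)]
  have hsum : T 1 0 ≤ ∑ k ∈ range m, ∑ l ∈ range m, T k l :=
    (single_le_sum (fun l _ => hT 1 l) h0).trans
      (single_le_sum (f := fun k => ∑ l ∈ range m, T k l)
        (fun k _ => sum_nonneg fun l _ => hT k l) h1)
  linarith [two_mul_powSum_cross_eq a m z w]

theorem tendsto_elasticity_atTop (hm : 0 < m) (ha : ∀ k, 0 < a k) :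
    Tendsto (elasticity a m) atTop (𝓝 ((m : ℝ) - 1)) := by
  obtain ⟨d, rfl⟩ := Nat.exists_eq_add_one_of_ne_zero hm.ne'
  have hlim := (tendsto_powSum_div_pow_atTop (fun k => k * a k) d).div
    (tendsto_powSum_div_pow_atTop a d) (ha d).ne'
  rw [mul_div_cancel_right₀ _ (ha d).ne'] at hlim
  push_cast
  rw [add_sub_cancel_right]
  refine hlim.congr' ?_
  filter_upwards [eventually_ne_atTop 0] with z hz
  exact div_div_div_cancel_right₀ (pow_ne_zero d hz) _ _

end elasticity

section sumElasticity

variable {ι : Type*} {s : Finset ι} {d : ι → ℕ} {a : ι → ℕ → ℝ}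

theorem continuousOn_sum_elasticity (hd : ∀ i ∈ s, 0 < d i) (ha : ∀ i ∈ s, ∀ k, 0 < a i k) :
    ContinuousOn (fun z => ∑ i ∈ s, elasticity (a i) (d i) z) (Set.Ici 0) :=
  continuousOn_finsetSum s fun i hi => continuousOn_elasticity (hd i hi) (ha i hi)

theorem strictMonoOn_sum_elasticity (hd : ∀ i ∈ s, 0 < d i) (ha : ∀ i ∈ s, ∀ k, 0 < a i k)
    (h2 : ∃ i ∈ s, 2 ≤ d i) :
    StrictMonoOn (fun z => ∑ i ∈ s, elasticity (a i) (d i) z) (Set.Ici 0) := by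
  intro z hz w hw hzw
  obtain ⟨i, hi, hdi⟩ := h2
  exact sum_lt_sum (fun j hj => monotoneOn_elasticity (hd j hj) (ha j hj) hz hw hzw.le)
    ⟨i, hi, strictMonoOn_elasticity hdi (ha i hi) hz hw hzw⟩

theorem tendsto_sum_elasticity_atTop (hd : ∀ i ∈ s, 0 < d i) (ha : ∀ i ∈ s, ∀ k, 0 < a i k) :
    Tendsto (fun z => ∑ i ∈ s, elasticity (a i) (d i) z) atTop
      (𝓝 (∑ i ∈ s, ((d i : ℝ) - 1))) :=
  tendsto_finsetSum s fun i hi => tendsto_elasticity_atTop (hd i hi) (ha i hi)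

end sumElasticity

theorem existsUnique_pos_eq_of_strictMonoOn {f : ℝ → ℝ} {c L : ℝ}
    (hcont : ContinuousOn f (Set.Ici 0)) (hmono : StrictMonoOn f (Set.Ioi 0)) (h0 : f 0 < c)
    (hlim : Tendsto f atTop (𝓝 L)) (hc : c < L) : ∃! z, z ∈ Set.Ioi 0 ∧ f z = c := by
  obtain ⟨Z, hZ, hZpos⟩ := ((hlim.eventually (eventually_gt_nhds hc)).and
    (eventually_gt_atTop 0)).exists
  obtain ⟨z, hz, hfz⟩ :=
    intermediate_value_Ioo hZpos.le (hcont.mono Set.Icc_subset_Ici_self) ⟨h0, hZ⟩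
  exact ⟨z, ⟨hz.1, hfz⟩, fun w ⟨hw, hfw⟩ => hmono.injOn hw hz.1 (hfw.trans hfz.symm)⟩

/-- For `χ ∈ (0, m-1+|I|/n)`, the function
`p(z) = (z/n) Σ_{i∈I} y_i/(1+y_i z) + (z/n) Σ_j g_{m-1,j}'(z)/g_{m-1,j}(z) - χ`
has exactly one root in `(0, ∞)`. -/
theorem stmt_3 (m n : ℕ) (hm : 1 ≤ m) (hn : 1 ≤ n) (x y : Fin n → ℝ)
    (hx : ∀ j, 0 < x j) (I : Finset (Fin n)) (hy : ∀ i ∈ I, 0 < y i)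
    (χ : ℝ) (hχ0 : 0 < χ) (hχ1 : χ < (m : ℝ) - 1 + (I.card : ℝ) / n) :
    ∃! z : ℝ, z ∈ Set.Ioi (0 : ℝ) ∧
      (z / n) * (∑ i ∈ I, y i / (1 + y i * z)) +
        (z / n) * (∑ j : Fin n,
          deriv (fun s : ℝ => ∑ k ∈ Finset.range m, s ^ k * x j ^ (m - 1 - k)) z /
            (∑ k ∈ Finset.range m, z ^ k * x j ^ (m - 1 - k))) - χ = 0 := by
  have hnR : (0 : ℝ) < n := by exact_mod_cast hn
  -- `inl i` stands for the factor `1 + y i z`, `inr j` for `g_{m-1,j}`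
  set s := I.disjSum (univ : Finset (Fin n))
  set d : Fin n ⊕ Fin n → ℕ := Sum.elim (fun _ => 2) (fun _ => m)
  set a : Fin n ⊕ Fin n → ℕ → ℝ := Sum.elim (fun i k => y i ^ k) (fun j k => x j ^ (m - 1 - k))
  have hd : ∀ i ∈ s, 0 < d i := by
    rintro (i | j) _ <;> simp only [d, Sum.elim_inl, Sum.elim_inr] <;> omega
  have ha : ∀ i ∈ s, ∀ k, 0 < a i k := by
    rintro (i | j) hi k
    · exact pow_pos (hy i (inl_mem_disjSum.1 hi)) k
    · exact pow_pos (hx j) _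
  have h2 : ∃ i ∈ s, 2 ≤ d i := by
    rcases I.eq_empty_or_nonempty with rfl | ⟨i, hi⟩
    · have hm1 : (1 : ℝ) < m := by
        simp only [card_empty, Nat.cast_zero, zero_div, add_zero] at hχ1
        linarith
      exact ⟨.inr ⟨0, hn⟩, inr_mem_disjSum.2 (mem_univ _), Nat.one_lt_cast.1 hm1⟩
    · exact ⟨.inl i, inl_mem_disjSum.2 hi, le_rfl⟩
  have hp : ∀ z : ℝ, (z / n) * (∑ i ∈ I, y i / (1 + y i * z)) +
      (z / n) * (∑ j : Fin n,
        deriv (fun s : ℝ => ∑ k ∈ Finset.range m, s ^ k * x j ^ (m - 1 - k)) z /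
          (∑ k ∈ Finset.range m, z ^ k * x j ^ (m - 1 - k))) - χ =
      (∑ i ∈ s, elasticity (a i) (d i) z) / n - χ := by
    intro z
    simp only [s, sum_disjSum, a, d, Sum.elim_inl, Sum.elim_inr, elasticity_two_pow, mul_sum,
      add_div, sum_div]
    congr 2 <;> refine sum_congr rfl fun j _ => ?_
    · ring
    · rw [← mul_deriv_powSum_div]
      change z / n * (deriv (powSum _ m) z / powSum _ m z) = _
      ring
  have hL : n * χ < ∑ i ∈ s, ((d i : ℝ) - 1) := by
    simp only [s, d, sum_disjSum, Sum.elim_inl, Sum.elim_inr, sum_const, card_univ,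
      Fintype.card_fin, nsmul_eq_mul]
    have := mul_lt_mul_of_pos_left hχ1 hnR
    rw [mul_add, mul_div_cancel₀ _ hnR.ne'] at this
    push_cast
    linarith
  refine (existsUnique_congr fun z => ?_).2 (existsUnique_pos_eq_of_strictMonoOn
    (continuousOn_sum_elasticity hd ha)
    ((strictMonoOn_sum_elasticity hd ha h2).mono Set.Ioi_subset_Ici_self)
    (by simpa [elasticity_zero] using mul_pos hnR hχ0) (tendsto_sum_elasticity_atTop hd ha) hL)
  rw [hp, sub_eq_zero, div_eq_iff hnR.ne', mul_comm]
end

section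
/- Let m ≥ 1, n ≥ 1, 0 < x₁ < x₂ < … < x_n, and χ ∈ (0, m). Define the degree-n polynomial f(u) = Σ_{j=1}^n m·u·∏_{i ≠ j}(u − x_i^m) − χ·n·∏_{i=1}^n (u − x_i^m). Then f has exactly one real root in each of the n intervals (−∞, 0), (x₁^m, x₂^m), (x₂^m, x₃^m), …, (x_{n-1}^m, x_n^m), and these account for all n complex roots of f. -/
/-- The real polynomial `f(u) = Σ_j m u ∏_{i≠j}(u - x_i^m) - χ n ∏_i (u - x_i^m)`. -/
noncomputable def stmt6f (m n : ℕ) (x : Fin n → ℝ) (χ : ℝ) (u : ℝ) : ℝ :=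
  (∑ j : Fin n, (m : ℝ) * u * ∏ i ∈ Finset.univ.erase j, (u - x i ^ m)) -
    χ * n * ∏ i : Fin n, (u - x i ^ m)

/-- The complexification of `stmt6f`. -/
noncomputable def stmt6fC (m n : ℕ) (x : Fin n → ℝ) (χ : ℝ) (u : ℂ) : ℂ :=
  (∑ j : Fin n, (m : ℂ) * u * ∏ i ∈ Finset.univ.erase j, (u - (x i : ℂ) ^ m)) -
    (χ : ℂ) * n * ∏ i : Fin n, (u - (x i : ℂ) ^ m)

/-!
Write `y i = x i ^ m` and `f(u) = Σ_j ((m - χ) u + χ y_j) ∏_{i ≠ j} (u - y_i)`, which is the given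
polynomial because `n ∏_i (u - y_i) = Σ_j (u - y_j) ∏_{i ≠ j} (u - y_i)`; it has degree at most `n`.
At a node only one summand survives, `f(y_k) = m y_k ∏_{i ≠ k} (y_k - y_i)`, so `f` changes sign
between consecutive nodes. `f(0) = -χ n ∏_i (-y_i)`, while for `u` so negative that every
`(m - χ) u + χ y_j` is negative (possible as `χ < m`) all summands of `f(u)` have the sign
opposite to that of `f(0)` (as `χ > 0`). The intermediate value theorem gives `n` roots in `n`
pairwise disjoint intervals, and a polynomial of degree at most `n` has no further roots, real or
complex.
-/

open Polynomial Finset Function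

theorem exists_mem_Ioo_eq_zero_of_mul_neg {f : ℝ → ℝ} {a b : ℝ} (hab : a ≤ b)
    (hf : ContinuousOn f (Set.Icc a b)) (h : f a * f b < 0) : ∃ u ∈ Set.Ioo a b, f u = 0 := by
  rcases mul_neg_iff.1 h with ⟨ha, hb⟩ | ⟨ha, hb⟩
  · exact intermediate_value_Ioo' hab hf ⟨hb, ha⟩
  · exact intermediate_value_Ioo hab hf ⟨ha, hb⟩

theorem Polynomial.exists_eq_of_isRoot_of_natDegree_le_card {R ι : Type*} [CommRing R]
    [IsDomain R] [Fintype ι] {p : R[X]} (hp : p ≠ 0) {r : ι → R} (hr : Injective r)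
    (hroot : ∀ k, p.IsRoot (r k)) (hdeg : p.natDegree ≤ Fintype.card ι) {z : R}
    (hz : p.IsRoot z) : ∃ k, r k = z := by
  classical
  by_contra! hne
  have hsub : (insert z (univ.map ⟨r, hr⟩)).val ⊆ p.roots := by
    intro a ha
    rw [mem_roots hp]
    obtain rfl | ⟨k, -, rfl⟩ := by simpa using ha
    exacts [hz, hroot k]
  have hcard := card_le_degree_of_subset_roots hsub
  rw [card_insert_of_notMem (by simpa using hne), card_map, card_univ] at hcard
  omega

theorem injective_of_forall_mem_of_pairwise_disjoint {ι α : Type*} {I : ι → Set α} {r : ι → α}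
    (hI : Pairwise (Disjoint on I)) (hr : ∀ k, r k ∈ I k) : Injective r := fun j k e ↦
  by_contra fun hjk ↦ Set.disjoint_left.1 (hI hjk) (hr j) (e ▸ hr k)

section RootIntervals

variable {ι : Type*} [Fintype ι] {p : ℝ[X]} {I : ι → Set ℝ}

theorem Polynomial.existsUnique_isRoot_mem_of_pairwise_disjoint (hp : p ≠ 0)
    (hdeg : p.natDegree ≤ Fintype.card ι) (hI : Pairwise (Disjoint on I))
    (hex : ∀ k, ∃ u ∈ I k, p.IsRoot u) (k : ι) : ∃! u, u ∈ I k ∧ p.IsRoot u := by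
  choose r hrI hroot using hex
  refine ⟨r k, ⟨hrI k, hroot k⟩, fun u ⟨hu, hpu⟩ ↦ ?_⟩
  obtain ⟨j, rfl⟩ := exists_eq_of_isRoot_of_natDegree_le_card hp
    (injective_of_forall_mem_of_pairwise_disjoint hI hrI) hroot hdeg hpu
  obtain rfl : j = k := by_contra fun hjk ↦ Set.disjoint_left.1 (hI hjk) (hrI j) hu
  rfl

theorem Polynomial.exists_mem_ofReal_eq_of_isRoot_map (hp : p ≠ 0)
    (hdeg : p.natDegree ≤ Fintype.card ι) (hI : Pairwise (Disjoint on I))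
    (hex : ∀ k, ∃ u ∈ I k, p.IsRoot u) {z : ℂ} (hz : (p.map (algebraMap ℝ ℂ)).IsRoot z) :
    ∃ k, ∃ u ∈ I k, (u : ℂ) = z := by
  choose r hrI hroot using hex
  obtain ⟨k, hk⟩ := exists_eq_of_isRoot_of_natDegree_le_card (r := fun k ↦ (r k : ℂ))
    ((Polynomial.map_ne_zero_iff (algebraMap ℝ ℂ).injective).2 hp)
    (Complex.ofReal_injective.comp (injective_of_forall_mem_of_pairwise_disjoint hI hrI))
    (fun k ↦ (hroot k).map) (by rwa [natDegree_map]) hz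
  exact ⟨k, r k, hrI k, hk⟩

end RootIntervals

theorem sum_affine_mul_prod_erase {R ι : Type*} [CommRing R] [DecidableEq ι] (s : Finset ι)
    (m χ u : R) (y : ι → R) :
    ∑ j ∈ s, ((m - χ) * u + χ * y j) * ∏ i ∈ s.erase j, (u - y i) =
      ∑ j ∈ s, m * u * ∏ i ∈ s.erase j, (u - y i) - χ * s.card * ∏ i ∈ s, (u - y i) := by
  have hcard : (s.card : R) * ∏ i ∈ s, (u - y i) =
      ∑ j ∈ s, (u - y j) * ∏ i ∈ s.erase j, (u - y i) := by
    rw [← nsmul_eq_mul, ← sum_const]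
    exact sum_congr rfl fun j hj ↦ (mul_prod_erase s _ hj).symm
  rw [mul_assoc, hcard, mul_sum, ← sum_sub_distrib]
  exact sum_congr rfl fun j _ ↦ by ring

section fPoly

variable {ι : Type*} [Fintype ι] [DecidableEq ι] (m χ : ℝ) (y : ι → ℝ)

noncomputable def fPoly : ℝ[X] :=
  ∑ j, (C (m - χ) * X + C (χ * y j)) * ∏ i ∈ univ.erase j, (X - C (y i))

theorem eval_fPoly (u : ℝ) :
    (fPoly m χ y).eval u = ∑ j, ((m - χ) * u + χ * y j) * ∏ i ∈ univ.erase j, (u - y i) := by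
  simp [fPoly, eval_finsetSum, eval_prod]

theorem eval_map_fPoly (z : ℂ) : ((fPoly m χ y).map (algebraMap ℝ ℂ)).eval z =
    ∑ j, ((m - χ : ℂ) * z + χ * y j) * ∏ i ∈ univ.erase j, (z - y i) := by
  simp [fPoly, eval_finsetSum, eval_prod, Polynomial.map_sum, Polynomial.map_prod]

theorem natDegree_fPoly_le : (fPoly m χ y).natDegree ≤ Fintype.card ι := by
  refine natDegree_sum_le_of_forall_le _ _ fun j _ ↦ natDegree_mul_le.trans ?_
  have hlin : (C (m - χ) * X + C (χ * y j)).natDegree ≤ 1 := by compute_degree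
  have hprod : (∏ i ∈ univ.erase j, (X - C (y i))).natDegree = Fintype.card ι - 1 := by
    rw [natDegree_prod_of_monic _ _ fun i _ ↦ monic_X_sub_C (y i)]
    simp [card_erase_of_mem]
  have : 0 < Fintype.card ι := Fintype.card_pos_iff.2 ⟨j⟩
  omega

theorem eval_fPoly_apply (k : ι) :
    (fPoly m χ y).eval (y k) = m * y k * ∏ i ∈ univ.erase k, (y k - y i) := by
  rw [eval_fPoly, sum_eq_single k]
  · ring
  · exact fun j _ hjk ↦ mul_eq_zero_of_right _
      (prod_eq_zero (mem_erase.2 ⟨Ne.symm hjk, mem_univ k⟩) (sub_self _))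
  · simp

theorem eval_fPoly_zero : (fPoly m χ y).eval 0 = -(χ * Fintype.card ι) * ∏ i, -y i := by
  rw [eval_fPoly, sum_affine_mul_prod_erase]
  simp

end fPoly

section Signs

variable {ι : Type*} [Fintype ι] [DecidableEq ι] {m χ : ℝ} {y : ι → ℝ}

theorem prod_erase_sub_mul_prod_erase_sub_neg_of_covBy [LinearOrder ι] (hy : StrictMono y)
    {a b : ι} (hab : a ⋖ b) :
    (∏ i ∈ univ.erase a, (y a - y i)) * ∏ i ∈ univ.erase b, (y b - y i) < 0 := by
  have hb : b ∈ univ.erase a := mem_erase.2 ⟨hab.lt.ne', mem_univ b⟩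
  have ha : a ∈ univ.erase b := mem_erase.2 ⟨hab.lt.ne, mem_univ a⟩
  rw [← mul_prod_erase _ _ hb, ← mul_prod_erase _ _ ha, erase_right_comm, mul_mul_mul_comm,
    ← prod_mul_distrib]
  refine mul_neg_of_neg_of_pos (by nlinarith [hy hab.lt]) (prod_pos fun i hi ↦ ?_)
  obtain ⟨hia, hib⟩ : i ≠ a ∧ i ≠ b := by simpa using hi
  -- every other node lies on the same side of `y a` as of `y b`
  rcases hia.lt_or_gt with hlt | hgt
  · exact mul_pos (sub_pos.2 (hy hlt)) (sub_pos.2 (hy (hlt.trans hab.lt)))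
  · have hbi : b < i := (hab.ge_of_gt hgt).lt_of_ne' hib
    exact mul_pos_of_neg_of_neg (sub_neg.2 (hy hgt)) (sub_neg.2 (hy hbi))

theorem eval_fPoly_mul_eval_fPoly_neg_of_covBy [LinearOrder ι] (hm : m ≠ 0) (hy : StrictMono y)
    (hy0 : ∀ i, 0 < y i) {a b : ι} (hab : a ⋖ b) :
    (fPoly m χ y).eval (y a) * (fPoly m χ y).eval (y b) < 0 := by
  rw [eval_fPoly_apply, eval_fPoly_apply, mul_mul_mul_comm,
    show m * y a * (m * y b) = m * m * (y a * y b) by ring]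
  exact mul_neg_of_pos_of_neg (mul_pos (mul_self_pos.2 hm) (mul_pos (hy0 a) (hy0 b)))
    (prod_erase_sub_mul_prod_erase_sub_neg_of_covBy hy hab)

theorem eval_fPoly_zero_mul_prod_neg [Nonempty ι] (hχ : 0 < χ) (hy0 : ∀ i, 0 < y i) :
    (fPoly m χ y).eval 0 * ∏ i, -y i < 0 := by
  have hprod : ∏ i, -y i ≠ 0 := prod_ne_zero_iff.2 fun i _ ↦ (neg_neg_of_pos (hy0 i)).ne
  have hcard : (0 : ℝ) < Fintype.card ι := Nat.cast_pos.2 Fintype.card_pos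
  rw [eval_fPoly_zero, mul_assoc, ← sq]
  exact mul_neg_of_neg_of_pos (neg_neg_of_pos (mul_pos hχ hcard)) (by positivity)

theorem fPoly_ne_zero [Nonempty ι] (hχ : 0 < χ) (hy0 : ∀ i, 0 < y i) : fPoly m χ y ≠ 0 :=
  fun h ↦ by simpa [h] using eval_fPoly_zero_mul_prod_neg (m := m) hχ hy0

theorem eval_fPoly_mul_eval_fPoly_zero_neg [Nonempty ι] (hχ : 0 < χ) (hy0 : ∀ i, 0 < y i)
    {u : ℝ} (hu : u < 0) (hlin : ∀ j, (m - χ) * u + χ * y j < 0) :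
    (fPoly m χ y).eval u * (fPoly m χ y).eval 0 < 0 := by
  have hu_pos : 0 < (fPoly m χ y).eval u * ∏ i, -y i := by
    rw [eval_fPoly, sum_mul]
    refine sum_pos (fun j _ ↦ ?_) univ_nonempty
    rw [← mul_prod_erase univ (fun i ↦ -y i) (mem_univ j), mul_mul_mul_comm, ← prod_mul_distrib]
    exact mul_pos (mul_pos_of_neg_of_neg (hlin j) (neg_neg_of_pos (hy0 j)))
      (prod_pos fun i _ ↦ mul_pos_of_neg_of_neg (by linarith [hy0 i]) (neg_neg_of_pos (hy0 i)))
  nlinarith [mul_neg_of_pos_of_neg hu_pos (eval_fPoly_zero_mul_prod_neg (m := m) hχ hy0),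
    sq_nonneg (∏ i, -y i)]

theorem exists_neg_eval_fPoly_mul_eval_fPoly_zero_neg [Nonempty ι] (hχ : 0 < χ) (hχm : χ < m)
    (hy0 : ∀ i, 0 < y i) : ∃ u < 0, (fPoly m χ y).eval u * (fPoly m χ y).eval 0 < 0 := by
  have hmχ : 0 < m - χ := sub_pos.2 hχm
  have hS : 0 < χ * ∑ i, y i + 1 := by
    have := sum_nonneg fun i (_ : i ∈ univ) ↦ (hy0 i).le
    positivity
  refine ⟨-(χ * ∑ i, y i + 1) / (m - χ), div_neg_of_neg_of_pos (neg_neg_of_pos hS) hmχ,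
    eval_fPoly_mul_eval_fPoly_zero_neg hχ hy0 (div_neg_of_neg_of_pos (neg_neg_of_pos hS) hmχ)
      fun j ↦ ?_⟩
  rw [mul_div_cancel₀ _ hmχ.ne']
  nlinarith [single_le_sum (fun i (_ : i ∈ univ) ↦ (hy0 i).le) (mem_univ j)]

end Signs

theorem stmt6f_eq_eval_fPoly (m n : ℕ) (x : Fin n → ℝ) (χ u : ℝ) :
    stmt6f m n x χ u = (fPoly m χ fun i ↦ x i ^ m).eval u := by
  rw [eval_fPoly, sum_affine_mul_prod_erase, card_univ, Fintype.card_fin, stmt6f]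

theorem stmt6fC_eq_eval_map_fPoly (m n : ℕ) (x : Fin n → ℝ) (χ : ℝ) (z : ℂ) :
    stmt6fC m n x χ z = ((fPoly m χ fun i ↦ x i ^ m).map (algebraMap ℝ ℂ)).eval z := by
  rw [eval_map_fPoly, sum_affine_mul_prod_erase, card_univ, Fintype.card_fin, stmt6fC]
  push_cast
  rfl

theorem Fin.castSucc_covBy_succ {n : ℕ} (k : Fin n) : k.castSucc ⋖ k.succ :=
  ⟨k.castSucc_lt_succ, fun c h₁ h₂ ↦ by
    simp only [Fin.lt_def, Fin.val_castSucc, Fin.val_succ] at h₁ h₂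
    omega⟩

section NodeIntervals

variable {n : ℕ} {m χ : ℝ} {y : Fin (n + 1) → ℝ}

def nodeIntervals (y : Fin (n + 1) → ℝ) : Fin (n + 1) → Set ℝ :=
  Fin.cons (Set.Iio 0) fun k ↦ Set.Ioo (y k.castSucc) (y k.succ)

theorem pairwise_disjoint_nodeIntervals (hy : StrictMono y) (hy0 : 0 ≤ y 0) :
    Pairwise (Disjoint on nodeIntervals y) := by
  refine (pairwise_disjoint_on _).2 fun i j hij ↦ Set.disjoint_left.2 fun u hi hj ↦ ?_
  induction j using Fin.cases with
  | zero => exact absurd hij (Fin.not_lt_zero i)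
  | succ l =>
    induction i using Fin.cases with
    | zero => exact (hy0.trans (hy.monotone (Fin.zero_le _))).not_gt (hj.1.trans hi)
    | succ k =>
      have := hy.monotone (Fin.succ_le_castSucc_iff.2 (Fin.succ_lt_succ_iff.1 hij))
      exact (hj.1.trans hi.2).not_ge this

theorem exists_isRoot_fPoly_mem_nodeIntervals (hχ : 0 < χ) (hχm : χ < m) (hy : StrictMono y)
    (hy0 : ∀ i, 0 < y i) (k : Fin (n + 1)) : ∃ u ∈ nodeIntervals y k, (fPoly m χ y).IsRoot u := by
  induction k using Fin.cases with
  | zero =>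
    obtain ⟨u₀, hu₀, hsign⟩ := exists_neg_eval_fPoly_mul_eval_fPoly_zero_neg hχ hχm hy0
    obtain ⟨u, hu, hu0⟩ := exists_mem_Ioo_eq_zero_of_mul_neg hu₀.le (fPoly m χ y).continuousOn hsign
    exact ⟨u, hu.2, hu0⟩
  | succ k =>
    exact exists_mem_Ioo_eq_zero_of_mul_neg (hy k.castSucc_lt_succ).le (fPoly m χ y).continuousOn
      (eval_fPoly_mul_eval_fPoly_neg_of_covBy (hχ.trans hχm).ne' hy hy0 k.castSucc_covBy_succ)

end NodeIntervals

theorem stmt_6_general (m n : ℕ) (hn : 1 ≤ n) (x : Fin n → ℝ)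
    (hx0 : ∀ i, 0 < x i) (hx : StrictMono x) (χ : ℝ) (hχ : χ ∈ Set.Ioo 0 (m : ℝ)) :
    (∃! u : ℝ, u ∈ Set.Iio 0 ∧ stmt6f m n x χ u = 0) ∧
    (∀ k : ℕ, ∀ hk : k + 1 < n,
      ∃! u : ℝ,
        u ∈ Set.Ioo (x ⟨k, Nat.lt_of_succ_lt hk⟩ ^ m) (x ⟨k + 1, hk⟩ ^ m) ∧
        stmt6f m n x χ u = 0) ∧
    (∀ z : ℂ, stmt6fC m n x χ z = 0 →
      ∃ u : ℝ, (u : ℂ) = z ∧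
        (u ∈ Set.Iio 0 ∨
          ∃ k : ℕ, ∃ hk : k + 1 < n,
            u ∈ Set.Ioo (x ⟨k, Nat.lt_of_succ_lt hk⟩ ^ m) (x ⟨k + 1, hk⟩ ^ m))) := by
  obtain ⟨n, rfl⟩ : ∃ n', n = n' + 1 := ⟨n - 1, by omega⟩
  obtain ⟨hχ0, hχm⟩ := hχ
  have hm : m ≠ 0 := by rintro rfl; simp at hχm; linarith
  set y : Fin (n + 1) → ℝ := fun i ↦ x i ^ m
  have hy0 : ∀ i, 0 < y i := fun i ↦ pow_pos (hx0 i) m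
  have hy : StrictMono y := fun a b hab ↦ pow_lt_pow_left₀ (hx hab) (hx0 a).le hm
  have hp := fPoly_ne_zero (m := m) hχ0 hy0
  have hdeg : (fPoly m χ y).natDegree ≤ Fintype.card (Fin (n + 1)) := natDegree_fPoly_le _ _ _
  have hI := pairwise_disjoint_nodeIntervals hy (hy0 0).le
  have hex := exists_isRoot_fPoly_mem_nodeIntervals hχ0 hχm hy hy0
  refine ⟨?_, fun k hk ↦ ?_, fun z hz ↦ ?_⟩
  · simp only [stmt6f_eq_eval_fPoly]
    exact existsUnique_isRoot_mem_of_pairwise_disjoint hp hdeg hI hex 0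
  · simp only [stmt6f_eq_eval_fPoly]
    exact existsUnique_isRoot_mem_of_pairwise_disjoint hp hdeg hI hex (Fin.succ ⟨k, by omega⟩)
  · rw [stmt6fC_eq_eval_map_fPoly] at hz
    obtain ⟨k, u, hu, rfl⟩ := exists_mem_ofReal_eq_of_isRoot_map hp hdeg hI hex hz
    refine ⟨u, rfl, ?_⟩
    induction k using Fin.cases with
    | zero => exact Or.inl hu
    | succ k => exact Or.inr ⟨k, by omega, hu⟩

/-- For `0 < x₁ < … < x_n` and `χ ∈ (0, m)`, the degree-`n` polynomial `f`
has exactly one root in each of `(-∞, 0)`, `(x₁^m, x₂^m)`, …, `(x_{n-1}^m, x_n^m)`,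
and these account for all complex roots of `f`. -/
theorem stmt_6 (m n : ℕ) (hm : 1 ≤ m) (hn : 1 ≤ n) (x : Fin n → ℝ)
    (hx0 : ∀ i, 0 < x i) (hx : StrictMono x) (χ : ℝ) (hχ : χ ∈ Set.Ioo 0 (m : ℝ)) :
    (∃! u : ℝ, u ∈ Set.Iio 0 ∧ stmt6f m n x χ u = 0) ∧
    (∀ k : ℕ, ∀ hk : k + 1 < n,
      ∃! u : ℝ,
        u ∈ Set.Ioo (x ⟨k, Nat.lt_of_succ_lt hk⟩ ^ m) (x ⟨k + 1, hk⟩ ^ m) ∧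
        stmt6f m n x χ u = 0) ∧
    (∀ z : ℂ, stmt6fC m n x χ z = 0 →
      ∃ u : ℝ, (u : ℂ) = z ∧
        (u ∈ Set.Iio 0 ∨
          ∃ k : ℕ, ∃ hk : k + 1 < n,
            u ∈ Set.Ioo (x ⟨k, Nat.lt_of_succ_lt hk⟩ ^ m) (x ⟨k + 1, hk⟩ ^ m))) :=
  stmt_6_general m n hn x hx0 hx χ hχ
end

section
/- Let λ be a partition with N parts, let ρ be a probability measure on partitions with N parts, let x₁,…,x_N be positive reals with s_λ(x₁,…,x_N) ≠ 0 for all λ in the support of ρ, and define the Schur generating function S(u₁,…,u_N) = Σ_λ ρ(λ) s_λ(u₁,…,u_N)/s_λ(x₁,…,x_N). Then for every positive integer k, the expectation under ρ of Σ_{i=1}^N (λ_i + N − i)^k equals [ (1/V_N(U)) Σ_{i=1}^N (u_i ∂_i)^k ( V_N(U)·S(U) ) ] evaluated at U = (x₁,…,x_N), where V_N is the Vandermonde determinant. -/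
/-- The Schur polynomial evaluated at `x`, defined as
`det(x_i^{λ_j + N - j}) / ∏_{i<j}(x_i - x_j)`. -/
noncomputable def schurEval (N : ℕ) (lam : Fin N → ℕ) (x : Fin N → ℝ) : ℝ :=
  Matrix.det (Matrix.of fun i j : Fin N => x i ^ (lam j + (N - 1 - (j : ℕ)))) /
    ∏ i : Fin N, ∏ j ∈ Finset.Ioi i, (x i - x j)

/-! The alternant `det (u_i ^ a_j)` is a signed sum of monomials whose exponent vectors are
permutations of `a`. A monomial is an eigenvector of `u_i ∂_i` with eigenvalue its `i`-th
exponent, so `Σ_i (u_i ∂_i)^k` multiplies every such monomial, hence the alternant itself, by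
`Σ_j a_j ^ k`. Now `V_N · S` is a combination of the alternants with `a = λ + δ`; evaluating at
`u = x` and dividing by `V_N(x)` leaves `Σ_λ ρ(λ) Σ_j (λ_j + N - j)^k · s_λ(x) / s_λ(x)`. -/

namespace MvPolynomial

section CommSemiring

variable {σ R : Type*} [CommSemiring R]

noncomputable def eulerOp (i : σ) : Module.End R (MvPolynomial σ R) :=
  LinearMap.mulLeft R (X i) ∘ₗ (pderiv i).toLinearMap

theorem eulerOp_apply (i : σ) (p : MvPolynomial σ R) : eulerOp i p = X i * pderiv i p :=
  rfl

theorem eulerOp_pow_monomial (i : σ) (k : ℕ) (m : σ →₀ ℕ) (r : R) :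
    (eulerOp i ^ k) (monomial m r) = m i ^ k • monomial m r := by
  induction k with
  | zero => simp
  | succ k ih =>
    rw [pow_succ', Module.End.mul_apply, ih, map_nsmul, eulerOp_apply, X_mul_pderiv_monomial,
      smul_smul, pow_succ]

variable [Fintype σ]

noncomputable def powerSumEulerOp (k : ℕ) : Module.End R (MvPolynomial σ R) :=
  ∑ i, eulerOp i ^ k

theorem powerSumEulerOp_apply (k : ℕ) (p : MvPolynomial σ R) :
    powerSumEulerOp k p = ∑ i, (fun q => X i * pderiv i q)^[k] p := by
  simp only [powerSumEulerOp, LinearMap.coe_sum, Finset.sum_apply, Module.End.coe_pow]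
  rfl

theorem powerSumEulerOp_prod_X_pow (k : ℕ) (f : σ → ℕ) :
    powerSumEulerOp k (∏ i, X i ^ f i : MvPolynomial σ R) = (∑ i, f i ^ k) • ∏ i, X i ^ f i := by
  classical
  simp only [prod_X_pow, powerSumEulerOp, LinearMap.coe_sum, Finset.sum_apply,
    eulerOp_pow_monomial, Finset.sum_smul, Finsupp.indicator_apply, Finset.mem_univ, dite_true]

end CommSemiring

section CommRing

variable {n R : Type*} [Fintype n] [DecidableEq n] [CommRing R]

noncomputable def alternant (a : n → ℕ) : MvPolynomial n R :=
  (Matrix.of fun i j => X i ^ a j).det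

theorem powerSumEulerOp_alternant (k : ℕ) (a : n → ℕ) :
    powerSumEulerOp k (alternant a : MvPolynomial n R) = (∑ j, a j ^ k) • alternant a := by
  have hterm (τ : Equiv.Perm n) :
      ∏ i, (X (τ i) : MvPolynomial n R) ^ a i = ∏ j, X j ^ a (τ.symm j) := by
    simpa using Equiv.prod_comp τ fun j => (X j : MvPolynomial n R) ^ a (τ.symm j)
  simp only [alternant, Matrix.det_apply, Matrix.of_apply, hterm, map_sum, Finset.smul_sum,
    Units.smul_def, map_zsmul, powerSumEulerOp_prod_X_pow]
  refine Finset.sum_congr rfl fun τ _ => ?_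
  rw [Equiv.sum_comp τ.symm fun j => a j ^ k, smul_comm]

theorem eval_alternant (x : n → R) (a : n → ℕ) :
    eval x (alternant a) = (Matrix.of fun i j => x i ^ a j).det := by
  rw [alternant, RingHom.map_det]
  congr 1
  ext i j
  simp

end CommRing

end MvPolynomial

open MvPolynomial in
theorem stmt_9_general (N : ℕ) (k : ℕ) (Λ : Finset (Fin N → ℕ)) (ρ : (Fin N → ℕ) → ℝ) (x : Fin N → ℝ)
    (hs : ∀ lam ∈ Λ, schurEval N lam x ≠ 0) :
    ∑ lam ∈ Λ, ρ lam * ∑ i : Fin N, ((lam i + (N - 1 - (i : ℕ)) : ℕ) : ℝ) ^ k =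
      MvPolynomial.eval x
          (∑ i : Fin N,
            (fun p : MvPolynomial (Fin N) ℝ => X i * pderiv i p)^[k]
              (∑ lam ∈ Λ,
                C (ρ lam / schurEval N lam x) *
                  Matrix.det (Matrix.of fun i j : Fin N =>
                    (X i : MvPolynomial (Fin N) ℝ) ^ (lam j + (N - 1 - (j : ℕ)))))) /
        ∏ i : Fin N, ∏ j ∈ Finset.Ioi i, (x i - x j) := by
  simp only [← alternant.eq_def, ← powerSumEulerOp_apply, ← smul_eq_C_mul, map_sum, map_smul,
    powerSumEulerOp_alternant, Finset.sum_div]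
  refine Finset.sum_congr rfl fun lam hlam => ?_
  rw [smul_eval, nsmul_eq_mul, map_mul, map_natCast, eval_alternant]
  have hne := hs lam hlam
  rw [schurEval] at hne ⊢
  -- with Lean's `_ / 0 = 0`, `s_λ(x) ≠ 0` also guarantees `V_N(x) ≠ 0`
  obtain ⟨hdet, hV⟩ := div_ne_zero_iff.mp hne
  push_cast
  field_simp

open MvPolynomial in
/-- For a (finitely supported) probability measure `ρ` on partitions with `N`
parts and the Schur generating function `S(u) = Σ_λ ρ(λ) s_λ(u)/s_λ(x)`, the expectation of
`Σ_i (λ_i + N - i)^k` equals `[(1/V_N) Σ_i (u_i∂_i)^k (V_N · S)]` evaluated at `u = x`.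
Here `V_N(u)·S(u) = Σ_λ (ρ(λ)/s_λ(x)) · det(u_i^{λ_j+N-j})` is a polynomial. -/
theorem stmt_9 (N : ℕ) (hN : 1 ≤ N) (k : ℕ) (hk : 1 ≤ k)
    (Λ : Finset (Fin N → ℕ)) (hΛ : ∀ lam ∈ Λ, Antitone lam)
    (ρ : (Fin N → ℕ) → ℝ) (hρ0 : ∀ lam ∈ Λ, 0 ≤ ρ lam) (hρ1 : ∑ lam ∈ Λ, ρ lam = 1)
    (x : Fin N → ℝ) (hx : ∀ i, 0 < x i) (hinj : Function.Injective x)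
    (hs : ∀ lam ∈ Λ, schurEval N lam x ≠ 0) :
    ∑ lam ∈ Λ, ρ lam * ∑ i : Fin N, ((lam i + (N - 1 - (i : ℕ)) : ℕ) : ℝ) ^ k =
      MvPolynomial.eval x
          (∑ i : Fin N,
            (fun p : MvPolynomial (Fin N) ℝ => X i * pderiv i p)^[k]
              (∑ lam ∈ Λ,
                C (ρ lam / schurEval N lam x) *
                  Matrix.det (Matrix.of fun i j : Fin N =>
                    (X i : MvPolynomial (Fin N) ℝ) ^ (lam j + (N - 1 - (j : ℕ)))))) /
        ∏ i : Fin N, ∏ j ∈ Finset.Ioi i, (x i - x j) :=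
  stmt_9_general N k Λ ρ x hs
end

section
/- Let μ be a probability measure on ℝ that is absolutely continuous with density bounded above by 1 (i.e., μ(A) ≤ Leb(A) for all measurable A) and has compact support. Then the variance of μ satisfies ∫ x² dμ − (∫ x dμ)² ≥ 1/12. -/
open MeasureTheory

private lemma sqrt_integral_calc : ∫ t in (0:ℝ)..(1/4), (1 - 2 * Real.sqrt t) = 1/12 := by
  have hsub : ∫ t in (0:ℝ)..(1/4), (1 - 2 * Real.sqrt t)
      = (∫ t in (0:ℝ)..(1/4), (1:ℝ)) - ∫ t in (0:ℝ)..(1/4), 2 * Real.sqrt t := by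
    apply intervalIntegral.integral_sub intervalIntegrable_const
    exact (continuous_const.mul Real.continuous_sqrt).intervalIntegrable _ _
  have hsqrt : ∫ t in (0:ℝ)..(1/4), Real.sqrt t = 1/12 := by
    have : ∫ t in (0:ℝ)..(1/4), Real.sqrt t = ∫ t in (0:ℝ)..(1/4), t ^ ((1:ℝ)/2) := by
      apply intervalIntegral.integral_congr
      intro t _
      exact Real.sqrt_eq_rpow t
    rw [this, integral_rpow (Or.inl (by norm_num))]
    have h1 : ((1:ℝ)/4) ^ ((1:ℝ)/2 + 1) = 1/8 := by
      rw [show ((1:ℝ)/4) = (1/2)^(2:ℕ) by norm_num, ← Real.rpow_natCast ((1:ℝ)/2) 2,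
        ← Real.rpow_mul (by norm_num)]
      rw [show ((2:ℕ):ℝ) * ((1:ℝ)/2 + 1) = ((3:ℕ):ℝ) by norm_num, Real.rpow_natCast]
      norm_num
    have h2 : (0:ℝ) ^ ((1:ℝ)/2 + 1) = 0 := Real.zero_rpow (by norm_num)
    rw [h1, h2]
    norm_num
  rw [hsub, intervalIntegral.integral_const_mul, hsqrt, intervalIntegral.integral_const]
  norm_num

/-- A compactly supported probability measure on `ℝ` with density bounded
above by 1 (i.e. `μ(A) ≤ Leb(A)`) has variance at least `1/12`. -/
theorem stmt_11 (μ : Measure ℝ) [IsProbabilityMeasure μ]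
    (hle : ∀ A : Set ℝ, MeasurableSet A → μ A ≤ volume A)
    (a b : ℝ) (hsupp : μ (Set.Icc a b)ᶜ = 0) :
    1 / 12 ≤ (∫ x, x ^ 2 ∂μ) - (∫ x, x ∂μ) ^ 2 := by
  have hae : ∀ᵐ x ∂μ, x ∈ Set.Icc a b := by
    rw [ae_iff]
    exact hsupp
  set M : ℝ := max |a| |b| with hM
  have habs : ∀ᵐ x ∂μ, |x| ≤ M := by
    filter_upwards [hae] with x hx
    exact abs_le_max_abs_abs hx.1 hx.2
  have hint1 : Integrable (fun x : ℝ => x) μ := by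
    refine (integrable_const M).mono' aestronglyMeasurable_id ?_
    filter_upwards [habs] with x hx
    simpa using hx
  have hint2 : Integrable (fun x : ℝ => x ^ 2) μ := by
    refine (integrable_const (M ^ 2)).mono' (by fun_prop) ?_
    filter_upwards [habs] with x hx
    have : |x| ^ 2 ≤ M ^ 2 := pow_le_pow_left₀ (abs_nonneg x) hx 2
    simpa [abs_pow, sq_abs] using this
  set c : ℝ := ∫ x, x ∂μ with hc
  have key : ∫ x, (x - c) ^ 2 ∂μ = (∫ x, x ^ 2 ∂μ) - c ^ 2 := by
    have heq : (fun x : ℝ => (x - c) ^ 2) = fun x => (x ^ 2 - 2 * c * x) + c ^ 2 := by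
      funext x; ring
    have h3 : Integrable (fun x : ℝ => x ^ 2 - 2 * c * x) μ :=
      hint2.sub (hint1.const_mul (2 * c))
    rw [heq, integral_add h3 (integrable_const _),
      integral_sub hint2 (hint1.const_mul (2 * c)), integral_const_mul, integral_const]
    simp [← hc, measure_univ]
    ring
  rw [← key]
  -- Now show 1/12 ≤ ∫ (x - c)^2 ∂μ via layer cake
  set f : ℝ → ℝ := fun x => (x - c) ^ 2 with hf
  have hnn : 0 ≤ᵐ[μ] f := ae_of_all _ fun x => sq_nonneg _
  have hmeas : Measurable f := by fun_prop
  rw [integral_eq_lintegral_of_nonneg_ae hnn hmeas.aestronglyMeasurable]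
  set L : ENNReal := ∫⁻ x, ENNReal.ofReal (f x) ∂μ with hL
  have hLtop : L ≠ ⊤ := by
    have hbd : ∀ᵐ x ∂μ, ENNReal.ofReal (f x) ≤ ENNReal.ofReal ((M + |c|) ^ 2) := by
      filter_upwards [habs] with x hx
      apply ENNReal.ofReal_le_ofReal
      have h1 : |x - c| ≤ M + |c| := (abs_sub _ _).trans (by gcongr)
      calc f x = |x - c| ^ 2 := by rw [sq_abs]
        _ ≤ (M + |c|) ^ 2 := pow_le_pow_left₀ (abs_nonneg _) h1 2
    have : L ≤ ENNReal.ofReal ((M + |c|) ^ 2) := by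
      calc L ≤ ∫⁻ _, ENNReal.ofReal ((M + |c|) ^ 2) ∂μ := lintegral_mono_ae hbd
        _ = ENNReal.ofReal ((M + |c|) ^ 2) := by simp [measure_univ]
    exact ne_top_of_le_ne_top ENNReal.ofReal_ne_top this
  have hlow : ENNReal.ofReal (1/12) ≤ L := by
    rw [hL, lintegral_eq_lintegral_meas_lt μ hnn hmeas.aemeasurable]
    have hanti : Antitone (fun t : ℝ => μ {x | t < f x}) := by
      intro s t hst
      exact measure_mono fun x hx => lt_of_le_of_lt hst hx
    have step1 : ∫⁻ t in Set.Ioc 0 (1/4 : ℝ), ENNReal.ofReal (1 - 2 * Real.sqrt t)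
        ≤ ∫⁻ t in Set.Ioc 0 (1/4 : ℝ), μ {x | t < f x} := by
      apply setLIntegral_mono hanti.measurable
      intro t ht
      -- μ {f ≤ t} ≤ ofReal (2√t)
      have hsub : {x : ℝ | f x ≤ t} ⊆ Set.Icc (c - Real.sqrt t) (c + Real.sqrt t) := by
        intro x hx
        have h1 : |x - c| ≤ Real.sqrt t := by
          have := Real.sqrt_le_sqrt hx
          rwa [Real.sqrt_sq_eq_abs] at this
        rcases abs_le.1 h1 with ⟨h2, h3⟩
        exact ⟨by linarith, by linarith⟩
      have hμle : μ {x : ℝ | f x ≤ t} ≤ ENNReal.ofReal (2 * Real.sqrt t) := by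
        calc μ {x : ℝ | f x ≤ t} ≤ μ (Set.Icc (c - Real.sqrt t) (c + Real.sqrt t)) :=
              measure_mono hsub
          _ ≤ volume (Set.Icc (c - Real.sqrt t) (c + Real.sqrt t)) :=
              hle _ measurableSet_Icc
          _ = ENNReal.ofReal (2 * Real.sqrt t) := by
              rw [Real.volume_Icc]; congr 1; ring
      have hcompl : {x : ℝ | t < f x} = {x : ℝ | f x ≤ t}ᶜ := by
        ext x; simp [not_le]
      have hms : MeasurableSet {x : ℝ | f x ≤ t} := hmeas measurableSet_Iic
      have heq : μ {x : ℝ | t < f x} = 1 - μ {x : ℝ | f x ≤ t} := by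
        rw [hcompl, measure_compl hms (measure_ne_top μ _), measure_univ]
      rw [heq]
      calc ENNReal.ofReal (1 - 2 * Real.sqrt t)
          = ENNReal.ofReal 1 - ENNReal.ofReal (2 * Real.sqrt t) :=
            ENNReal.ofReal_sub _ (by positivity)
        _ ≤ 1 - μ {x : ℝ | f x ≤ t} := by
            rw [ENNReal.ofReal_one]
            exact tsub_le_tsub_left hμle 1
    have step2 : ∫⁻ t in Set.Ioc 0 (1/4 : ℝ), μ {x | t < f x}
        ≤ ∫⁻ t in Set.Ioi (0 : ℝ), μ {x | t < f x} :=
      lintegral_mono_set Set.Ioc_subset_Ioi_self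
    have step0 : ENNReal.ofReal (1/12)
        ≤ ∫⁻ t in Set.Ioc 0 (1/4 : ℝ), ENNReal.ofReal (1 - 2 * Real.sqrt t) := by
      have hnn' : ∀ᵐ t ∂(volume.restrict (Set.Ioc (0:ℝ) (1/4))),
          0 ≤ 1 - 2 * Real.sqrt t := by
        rw [ae_restrict_iff' measurableSet_Ioc]
        refine ae_of_all _ fun t ht => ?_
        nlinarith [Real.sq_sqrt ht.1.le, Real.sqrt_nonneg t, ht.2]
      have hintble : IntegrableOn (fun t : ℝ => 1 - 2 * Real.sqrt t)
          (Set.Ioc (0:ℝ) (1/4)) volume :=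
        (continuous_const.sub (continuous_const.mul Real.continuous_sqrt)).integrableOn_Ioc
      rw [← ofReal_integral_eq_lintegral_ofReal hintble hnn']
      apply ENNReal.ofReal_le_ofReal
      rw [← intervalIntegral.integral_of_le (by norm_num : (0:ℝ) ≤ 1/4)]
      rw [sqrt_integral_calc]
    exact step0.trans (step1.trans step2)
  calc (1:ℝ)/12 = (ENNReal.ofReal (1/12)).toReal := by
        rw [ENNReal.toReal_ofReal]; norm_num
    _ ≤ L.toReal := ENNReal.toReal_mono hLtop hlow
end
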